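/- If f ∈ ℝ[x,y]_d is a binary form and g ∈ ℝ[u,v]_r is a form of degree r that annihilates f (as a differential operator g(∂_x,∂_y)f = 0) and splits as a product of r pairwise non-proportional real linear forms, then the real rank of f is at most r. -/

import Mathlib

/-!
Write `D_{a,b} = a ∂_x + b ∂_y`, so that `g = ∏ ℓᵢ` acts as `D_{a_r,b_r} ∘ ⋯ ∘ D_{a_1,b_1}` and
`D_{a,b} (B x - A y)^{n+1} = (n+1)(aB - bA) (B x - A y)^n`. The kernel of `D_{a,b}` on forms of
degree `d` is spanned by `(b x - a y)^d`: both partials of such a form lie in the kernel again,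
hence are multiples of `(b x - a y)^{d-1}` by induction, and Euler's identity recovers the form.
Induct on `r`: `D_{a_1,b_1} f` is annihilated by the remaining factors, so it is a combination of
the powers `(b_i x - a_i y)^{d-1}`, `i ≥ 2`. Since `a_1 b_i - b_1 a_i ≠ 0`, integrating term by term
gives a combination `h` of the powers `(b_i x - a_i y)^d` with `D_{a_1,b_1} (f - h) = 0`, and then
`f - h` is a multiple of `(b_1 x - a_1 y)^d`.
-/

open MvPolynomial

noncomputable def pd0 : Module.End ℝ (MvPolynomial (Fin 2) ℝ) :=
  (pderiv (0 : Fin 2)).toLinearMap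

noncomputable def pd1 : Module.End ℝ (MvPolynomial (Fin 2) ℝ) :=
  (pderiv (1 : Fin 2)).toLinearMap

/-- The action of a dual form `g(u,v)` on a binary form `f(x,y)` by substituting
`u = ∂_x`, `v = ∂_y`. -/
noncomputable def diffOp (g f : MvPolynomial (Fin 2) ℝ) : MvPolynomial (Fin 2) ℝ :=
  (AddMonoidAlgebra.coeff g).sum fun m c => c • ((pd0 ^ m 0 * pd1 ^ m 1) f)

noncomputable def linForm (a b : ℝ) : MvPolynomial (Fin 2) ℝ := C a * X 0 + C b * X 1

noncomputable def realRank (d : ℕ) (f : MvPolynomial (Fin 2) ℝ) : ℕ :=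
  sInf {r | ∃ c a b : Fin r → ℝ, f = ∑ i, C (c i) * linForm (a i) (b i) ^ d}

theorem MvPolynomial.pderiv_pderiv_comm {R σ : Type*} [CommSemiring R] (i j : σ)
    (f : MvPolynomial σ R) : pderiv i (pderiv j f) = pderiv j (pderiv i f) := by
  classical
  induction f using MvPolynomial.induction_on with
  | C c => simp only [derivation_C, map_zero]
  | add p q hp hq => simp only [map_add, hp, hq]
  | mul_X p k hp =>
    have hX (l m : σ) : pderiv l (pderiv m (X k : MvPolynomial σ R)) = 0 := by
      rw [pderiv_X, Pi.single_apply]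
      split_ifs <;> simp only [Derivation.map_one_eq_zero, map_zero]
    simp only [Derivation.leibniz, map_add, smul_eq_mul, hp, hX, mul_zero]
    ring

lemma MvPolynomial.IsHomogeneous.eq_C_coeff_zero {σ R : Type*} [CommSemiring R]
    {f : MvPolynomial σ R} (hf : f.IsHomogeneous 0) : f = C (coeff 0 f) :=
  totalDegree_eq_zero_iff_eq_C.mp ((totalDegree_zero_iff_isHomogeneous _).mpr hf)

section DiffOpAlgHom

open scoped IsMulCommutative

instance : IsMulCommutative (Algebra.adjoin ℝ {pd0, pd1}) :=
  Algebra.isMulCommutative_adjoin ℝ <| by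
    have h : pd0 * pd1 = pd1 * pd0 := LinearMap.ext fun f => pderiv_pderiv_comm 0 1 f
    simp only [Set.mem_insert_iff, Set.mem_singleton_iff]
    rintro _ (rfl | rfl) _ (rfl | rfl) <;> simp [h]

/-- `∂_x` and `∂_y` commute, so `u ↦ ∂_x, v ↦ ∂_y` extends to an algebra map into the commutative
subalgebra of endomorphisms they generate; `diffOp` is the resulting action. -/
noncomputable def diffOpAlgHom :
    MvPolynomial (Fin 2) ℝ →ₐ[ℝ] Module.End ℝ (MvPolynomial (Fin 2) ℝ) :=
  (Algebra.adjoin ℝ {pd0, pd1}).val.comp <| aeval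
    ![⟨pd0, Algebra.subset_adjoin (by simp)⟩, ⟨pd1, Algebra.subset_adjoin (by simp)⟩]

lemma diffOp_eq_diffOpAlgHom (g f : MvPolynomial (Fin 2) ℝ) : diffOp g f = diffOpAlgHom g f := by
  induction g using MvPolynomial.induction_on' with
  | monomial m c =>
    rw [diffOp, sum_monomial_eq (zero_smul ℝ _), diffOpAlgHom, AlgHom.comp_apply,
      aeval_monomial, Finsupp.prod_fintype _ _ (fun _ => pow_zero _), Fin.prod_univ_two]
    simp [Algebra.smul_def]
  | add p q hp hq =>
    rw [map_add, LinearMap.add_apply, ← hp, ← hq]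
    exact Finsupp.sum_add_index' (fun _ => zero_smul ℝ _) (fun _ _ _ => add_smul _ _ _)

end DiffOpAlgHom

lemma diffOp_one (f : MvPolynomial (Fin 2) ℝ) : diffOp 1 f = f := by
  simp [diffOp_eq_diffOpAlgHom]

lemma diffOp_mul (g h f : MvPolynomial (Fin 2) ℝ) :
    diffOp (g * h) f = diffOp g (diffOp h f) := by
  simp [diffOp_eq_diffOpAlgHom]

noncomputable def dirDeriv (a b : ℝ) : Module.End ℝ (MvPolynomial (Fin 2) ℝ) := a • pd0 + b • pd1

lemma dirDeriv_apply (a b : ℝ) (f : MvPolynomial (Fin 2) ℝ) :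
    dirDeriv a b f = a • pderiv 0 f + b • pderiv 1 f := rfl

lemma diffOp_linForm (a b : ℝ) (f : MvPolynomial (Fin 2) ℝ) :
    diffOp (linForm a b) f = dirDeriv a b f := by
  simp [diffOp_eq_diffOpAlgHom, diffOpAlgHom, linForm, dirDeriv, Algebra.smul_def]

lemma dirDeriv_pderiv (a b : ℝ) (i : Fin 2) (f : MvPolynomial (Fin 2) ℝ) :
    dirDeriv a b (pderiv i f) = pderiv i (dirDeriv a b f) := by
  simp [dirDeriv_apply, pderiv_pderiv_comm i]

lemma MvPolynomial.IsHomogeneous.dirDeriv {d : ℕ} {f : MvPolynomial (Fin 2) ℝ}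
    (hf : f.IsHomogeneous d) (a b : ℝ) : (dirDeriv a b f).IsHomogeneous (d - 1) := by
  rw [dirDeriv_apply, smul_eq_C_mul, smul_eq_C_mul]
  exact (IsHomogeneous.C_mul hf.pderiv a).add (IsHomogeneous.C_mul hf.pderiv b)

lemma linForm_isHomogeneous (a b : ℝ) : (linForm a b).IsHomogeneous 1 :=
  (isHomogeneous_C_mul_X a 0).add (isHomogeneous_C_mul_X b 1)

lemma dirDeriv_linForm_pow (a b c e : ℝ) (n : ℕ) :
    dirDeriv a b (linForm c e ^ (n + 1)) = C ((n + 1) * (a * c + b * e)) * linForm c e ^ n := by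
  simp only [linForm, dirDeriv_apply, Derivation.leibniz_pow, add_tsub_cancel_right, map_add,
    Derivation.leibniz, pderiv_X, Pi.single_eq_same, Pi.single_eq_of_ne one_ne_zero,
    Pi.single_eq_of_ne zero_ne_one, derivation_C, smul_eq_mul, nsmul_eq_mul, smul_eq_C_mul,
    map_mul, map_natCast, map_one, Nat.cast_succ]
  ring

lemma exists_eq_C_mul_linForm_pow_of_dirDeriv_eq_zero {a b : ℝ} (hab : (a, b) ≠ (0, 0)) :
    ∀ {d : ℕ} {f : MvPolynomial (Fin 2) ℝ}, f.IsHomogeneous d → dirDeriv a b f = 0 →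
      ∃ c : ℝ, f = C c * linForm b (-a) ^ d
  | 0, f, hf, _ => ⟨coeff 0 f, by rw [pow_zero, mul_one]; exact hf.eq_C_coeff_zero⟩
  | n + 1, f, hf, hD => by
    have hnorm : b * b + a * a ≠ 0 := fun h => hab <| by
      rw [Prod.mk.injEq]; constructor <;> nlinarith [sq_nonneg a, sq_nonneg b]
    obtain ⟨c₀, hc₀⟩ := exists_eq_C_mul_linForm_pow_of_dirDeriv_eq_zero hab
      (hf.pderiv (i := 0)) (by rw [dirDeriv_pderiv, hD, map_zero])
    obtain ⟨c₁, hc₁⟩ := exists_eq_C_mul_linForm_pow_of_dirDeriv_eq_zero hab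
      (hf.pderiv (i := 1)) (by rw [dirDeriv_pderiv, hD, map_zero])
    -- evaluate `a ∂_x f + b ∂_y f = 0` at `(b, -a)`, where `b x - a y` does not vanish
    have hc : a * c₀ + b * c₁ = 0 := by
      have := congrArg (eval ![b, -a]) hD
      simp only [dirDeriv_apply, hc₀, hc₁, add_tsub_cancel_right, linForm, map_add, smul_eval,
        map_mul, map_pow, eval_C, eval_X, Matrix.cons_val_zero, Matrix.cons_val_one, map_zero] at this
      have hpos : (b * b + a * a) ^ n ≠ 0 := pow_ne_zero _ hnorm
      exact (mul_eq_zero.mp (by linear_combination this)).resolve_right hpos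
    obtain ⟨s, rfl, rfl⟩ : ∃ s, c₀ = s * b ∧ c₁ = -(s * a) :=
      ⟨(b * c₀ - a * c₁) / (b * b + a * a),
        by rw [div_mul_eq_mul_div, eq_div_iff hnorm]; linear_combination a * hc,
        by rw [div_mul_eq_mul_div, ← neg_div, eq_div_iff hnorm]; linear_combination b * hc⟩
    have hEuler : ((n : ℝ) + 1) • f = C s * linForm b (-a) ^ (n + 1) := by
      have := hf.sum_X_mul_pderiv
      rw [Fin.sum_univ_two, hc₀, hc₁, Nat.add_sub_cancel, ← Nat.cast_smul_eq_nsmul ℝ,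
        Nat.cast_succ] at this
      rw [← this, pow_succ, linForm]
      simp only [map_mul, map_neg]
      ring
    refine ⟨s / (n + 1), ?_⟩
    rw [div_eq_inv_mul, map_mul, mul_assoc, ← hEuler, ← smul_eq_C_mul, smul_smul,
      inv_mul_cancel₀ (by positivity), one_smul]

lemma exists_eq_sum_C_mul_linForm_pow_of_diffOp_prod_eq_zero :
    ∀ {r : ℕ} (a b : Fin r → ℝ), (∀ i, (a i, b i) ≠ (0, 0)) →
      (∀ i j, i ≠ j → a i * b j ≠ a j * b i) → ∀ {d : ℕ} {f : MvPolynomial (Fin 2) ℝ},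
      f.IsHomogeneous d → diffOp (∏ i, linForm (a i) (b i)) f = 0 →
      ∃ c : Fin r → ℝ, f = ∑ i, C (c i) * linForm (b i) (-a i) ^ d
  | 0, _, _, _, _, _, f, _, hann => ⟨0, by simpa [diffOp_one] using hann⟩
  | r + 1, _, _, _, _, 0, f, hf, _ =>
    ⟨Fin.cons (coeff 0 f) 0, by simpa [Fin.sum_univ_succ] using hf.eq_C_coeff_zero⟩
  | r + 1, a, b, hnz, hnp, n + 1, f, hf, hann => by
    rw [Fin.prod_univ_succ, mul_comm, diffOp_mul, diffOp_linForm] at hann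
    obtain ⟨e, he⟩ := exists_eq_sum_C_mul_linForm_pow_of_diffOp_prod_eq_zero
      (fun i => a i.succ) (fun i => b i.succ) (fun i => hnz i.succ)
      (fun i j hij => hnp _ _ ((Fin.succ_injective _).ne hij)) (hf.dirDeriv (a 0) (b 0)) hann
    rw [Nat.add_sub_cancel] at he
    set κ : Fin r → ℝ := fun i => (n + 1) * (a 0 * b i.succ + b 0 * -a i.succ)
    have hκ (i : Fin r) : κ i ≠ 0 := by
      have := hnp 0 i.succ (Fin.succ_ne_zero i).symm
      exact mul_ne_zero (by positivity) fun h => this (by linarith)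
    set h := ∑ i, C (e i / κ i) * linForm (b i.succ) (-a i.succ) ^ (n + 1)
    have hDh : dirDeriv (a 0) (b 0) h = dirDeriv (a 0) (b 0) f := by
      rw [he, map_sum]
      refine Finset.sum_congr rfl fun i _ => ?_
      rw [← smul_eq_C_mul, map_smul, dirDeriv_linForm_pow, smul_eq_C_mul, ← mul_assoc,
        ← map_mul, div_mul_cancel₀ _ (hκ i)]
    have hh : h.IsHomogeneous (n + 1) := IsHomogeneous.sum _ _ _ fun i _ => by
      simpa using ((linForm_isHomogeneous _ _).pow (n + 1)).C_mul (e i / κ i)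
    obtain ⟨c₀, hc₀⟩ := exists_eq_C_mul_linForm_pow_of_dirDeriv_eq_zero (hnz 0) (hf.sub hh)
      (by rw [map_sub, hDh, sub_self])
    exact ⟨Fin.cons c₀ fun i => e i / κ i, by simp [Fin.sum_univ_succ, ← hc₀, h]⟩

/-- One direction of the Apolarity Lemma: if a real-rooted form `g = ∏ (aᵢu + bᵢv)` of
degree `r`, with pairwise non-proportional nonzero real linear factors, annihilates
the degree-`d` form `f`, then the real rank of `f` is at most `r`. -/
theorem realRank_le_of_real_rooted_apolar (d r : ℕ) (f : MvPolynomial (Fin 2) ℝ)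
    (hf : f.IsHomogeneous d) (a b : Fin r → ℝ) (hnz : ∀ i, (a i, b i) ≠ (0, 0))
    (hnp : ∀ i j, i ≠ j → a i * b j ≠ a j * b i)
    (hann : diffOp (∏ i, linForm (a i) (b i)) f = 0) :
    realRank d f ≤ r := by
  obtain ⟨c, hc⟩ := exists_eq_sum_C_mul_linForm_pow_of_diffOp_prod_eq_zero a b hnz hnp hf hann
  exact Nat.sInf_le ⟨c, b, fun i => -a i, hc⟩
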